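/- Let p : ℝ⁴ × ℝ → ℝ be C¹ and positive, V : ℝ⁴ → ℝ⁴ be C¹. If ∂_τ p + ∂_μ(V^μ p) = 0 and moreover ∂_μ (ρ V^μ) = 0 for a positive C¹ function ρ : ℝ⁴ → ℝ, then along any C¹ curve y(τ) with y'(τ) = V(y(τ)): d/dτ ln p(y(τ), τ) = d/dτ ln ρ(y(τ)). -/

import Mathlib

/-!
Expanding both conservation laws with the product rule, `∂_τ p + ∇p · V = -(div V) p` and
`∇ρ · V = -(div V) ρ`. Along an integral curve of `V` the left-hand sides are the derivatives
of `p(y(τ), τ)` and `ρ(y(τ))`, so both logarithmic derivatives equal `-div V`.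
-/

noncomputable section

/-- Spatial partial derivative in direction `μ`. -/
def pd (f : (Fin 4 → ℝ) → ℝ) (μ : Fin 4) (x : Fin 4 → ℝ) : ℝ :=
  fderiv ℝ f x (Pi.single μ 1)

def divergence (W : (Fin 4 → ℝ) → Fin 4 → ℝ) (x : Fin 4 → ℝ) : ℝ :=
  ∑ μ, pd (fun z => W z μ) μ x

theorem fderiv_apply_eq_sum_pd (f : (Fin 4 → ℝ) → ℝ) (x v : Fin 4 → ℝ) :
    fderiv ℝ f x v = ∑ μ, v μ * pd f μ x := by
  conv_lhs => rw [pi_eq_sum_univ' v]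
  simp [pd]

theorem pd_mul {f g : (Fin 4 → ℝ) → ℝ} {x : Fin 4 → ℝ} (hf : DifferentiableAt ℝ f x)
    (hg : DifferentiableAt ℝ g x) (μ : Fin 4) :
    pd (fun z => f z * g z) μ x = g x * pd f μ x + f x * pd g μ x := by
  simp only [pd, fderiv_fun_mul hf hg, ContinuousLinearMap.add_apply,
    ContinuousLinearMap.smul_apply, smul_eq_mul]
  ring

theorem divergence_mul {f : (Fin 4 → ℝ) → ℝ} {W : (Fin 4 → ℝ) → Fin 4 → ℝ} {x : Fin 4 → ℝ}
    (hf : DifferentiableAt ℝ f x) (hW : DifferentiableAt ℝ W x) :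
    divergence (fun z μ => f z * W z μ) x = fderiv ℝ f x (W x) + f x * divergence W x := by
  rw [divergence, fderiv_apply_eq_sum_pd, divergence, Finset.mul_sum, ← Finset.sum_add_distrib]
  exact Finset.sum_congr rfl fun μ _ => pd_mul hf (differentiableAt_pi.1 hW μ) μ

theorem hasDerivAt_along_curve {E : Type*} [NormedAddCommGroup E] [NormedSpace ℝ E]
    {P : E → ℝ → ℝ} {y : ℝ → E} {v : E} {τ : ℝ}
    (hP : DifferentiableAt ℝ (fun q : E × ℝ => P q.1 q.2) (y τ, τ)) (hy : HasDerivAt y v τ) :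
    HasDerivAt (fun s => P (y s) s)
      (fderiv ℝ (fun z => P z τ) (y τ) v + deriv (fun t => P (y τ) t) τ) τ := by
  set L := fderiv ℝ (fun q : E × ℝ => P q.1 q.2) (y τ, τ)
  have hspace : HasFDerivAt (fun z => P z τ) (L.comp (ContinuousLinearMap.inl ℝ E ℝ)) (y τ) :=
    HasFDerivAt.comp (g := fun q : E × ℝ => P q.1 q.2) (f := fun z => (z, τ)) (y τ)
      hP.hasFDerivAt (hasFDerivAt_prodMk_left (y τ) τ)
  have htime : HasDerivAt (fun t => P (y τ) t) (L (0, 1)) τ :=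
    hP.hasFDerivAt.comp_hasDerivAt τ ((hasDerivAt_const τ (y τ)).prodMk (hasDerivAt_id τ))
  have hsplit : L (v, 1) = L (v, 0) + L (0, 1) := by rw [← map_add]; simp
  rw [hspace.fderiv, htime.deriv, ContinuousLinearMap.comp_apply, ContinuousLinearMap.inl_apply,
    ← hsplit]
  exact hP.hasFDerivAt.comp_hasDerivAt (f := fun s => (y s, s)) τ (hy.prodMk (hasDerivAt_id' τ))

theorem HasDerivAt.log_of_eq_mul_self {f : ℝ → ℝ} {c x : ℝ} (hf : HasDerivAt f (c * f x) x)
    (hx : f x ≠ 0) : HasDerivAt (fun s => Real.log (f s)) c x := by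
  simpa [hx] using hf.log hx

/-- Lagrangian-derivative identity: if `∂_τ p + ∂_μ(V^μ p) = 0` and `∂_μ(ρ V^μ) = 0`,
then along any integral curve of `V`, `d/dτ ln p(y(τ),τ) = d/dτ ln ρ(y(τ))`. -/
theorem lagrangian_log_identity
    (p : (Fin 4 → ℝ) → ℝ → ℝ)
    (hp : ContDiff ℝ 1 (fun q : (Fin 4 → ℝ) × ℝ => p q.1 q.2))
    (hppos : ∀ x τ, 0 < p x τ)
    (V : (Fin 4 → ℝ) → Fin 4 → ℝ) (hV : ContDiff ℝ 1 V)
    (ρ : (Fin 4 → ℝ) → ℝ) (hρ : ContDiff ℝ 1 ρ) (hρpos : ∀ x, 0 < ρ x)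
    (hcont : ∀ x τ, deriv (fun t => p x t) τ + ∑ μ, pd (fun z => V z μ * p z τ) μ x = 0)
    (hdiv : ∀ x, ∑ μ, pd (fun z => ρ z * V z μ) μ x = 0)
    (y : ℝ → Fin 4 → ℝ) (hy : ContDiff ℝ 1 y) (hyV : ∀ τ, deriv y τ = V (y τ)) :
    ∀ τ, deriv (fun s => Real.log (p (y s) s)) τ
        = deriv (fun s => Real.log (ρ (y s))) τ := by
  intro τ
  set x := y τ
  have hyx : HasDerivAt y (V x) τ := hyV τ ▸ (hy.differentiable one_ne_zero τ).hasDerivAt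
  have hVx : DifferentiableAt ℝ V x := hV.differentiable one_ne_zero x
  have hp_curve : HasDerivAt (fun s => p (y s) s) (-divergence V x * p x τ) τ := by
    have hslice : DifferentiableAt ℝ (fun z => p z τ) x :=
      (hp.comp (contDiff_id.prodMk contDiff_const)).differentiable one_ne_zero x
    have h : deriv (fun t => p x t) τ + divergence (fun z μ => p z τ * V z μ) x = 0 := by
      simpa only [divergence, mul_comm (V _ _)] using hcont x τ
    rw [divergence_mul hslice hVx] at h
    exact (hasDerivAt_along_curve (hp.differentiable one_ne_zero _) hyx).congr_deriv
      (by linarith)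
  have hρ_curve : HasDerivAt (fun s => ρ (y s)) (-divergence V x * ρ x) τ := by
    have h : divergence (fun z μ => ρ z * V z μ) x = 0 := hdiv x
    rw [divergence_mul (hρ.differentiable one_ne_zero x) hVx] at h
    exact ((hρ.differentiable one_ne_zero x).hasFDerivAt.comp_hasDerivAt τ hyx).congr_deriv
      (by linarith)
  rw [(hp_curve.log_of_eq_mul_self (hppos x τ).ne').deriv,
    (hρ_curve.log_of_eq_mul_self (hρpos x).ne').deriv]
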